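/- arXiv:1406.1916 — 2 statements merged into one kernel-verified Lean document; each statement's English description precedes it below -/
import Mathlib

section
/- Let T : ℝᵖ → ℝᵐ be a linear map whose restriction to a compact smooth embedded submanifold M ⊆ ℝᵖ satisfies (1−κ)c‖z−z'‖ ≤ ‖Tz−Tz'‖ ≤ (1+κ)c‖z−z'‖ for all z, z' ∈ M, for some constants c > 0 and κ ∈ (0,1). Then the differential of T restricted to the tangent space T_zM is injective at every z ∈ M, so T restricted to M is a smooth immersion, and being an injective immersion of a compact manifold, T|_M is a smooth embedding (a diffeomorphism onto its image). -/
open Manifold Filter Topology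

/-!
A lower bound `a ‖f z - f z'‖ ≤ ‖T (f z) - T (f z')‖` with `a > 0` passes to difference
quotients along chart lines, hence to the differential: `a ‖Df v‖ ≤ ‖T (Df v)‖`. So `T` kills
no nonzero tangent vector and `T ∘ f` is an immersion. The same bound makes `T ∘ f` injective,
and a continuous injection of a compact space into a Hausdorff space is a closed embedding.
-/

theorem Function.Injective.of_mul_norm_sub_le {α E F : Type*} [NormedAddCommGroup E]
    [NormedAddCommGroup F] {f : α → E} {g : α → F} {a : ℝ} (hf : Function.Injective f)
    (ha : 0 < a) (h : ∀ x y, a * ‖f x - f y‖ ≤ ‖g x - g y‖) : Function.Injective g := by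
  intro x y hxy
  have hbound := h x y
  rw [hxy, sub_self, norm_zero] at hbound
  exact hf (sub_eq_zero.1 (norm_le_zero_iff.1 (nonpos_of_mul_nonpos_right hbound ha)))

section LowerBound

variable {E F G : Type*} [NormedAddCommGroup E] [NormedSpace ℝ E]
  [NormedAddCommGroup F] [NormedSpace ℝ F] [NormedAddCommGroup G] [NormedSpace ℝ G] {a : ℝ}

theorem HasDerivAt.mul_norm_le_of_eventually {γ : ℝ → F} {δ : ℝ → G} {w : F} {w' : G} {t₀ : ℝ}
    (hγ : HasDerivAt γ w t₀) (hδ : HasDerivAt δ w' t₀)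
    (h : ∀ᶠ t in 𝓝 t₀, a * ‖γ t - γ t₀‖ ≤ ‖δ t - δ t₀‖) : a * ‖w‖ ≤ ‖w'‖ := by
  refine le_of_tendsto_of_tendsto ((hasDerivAt_iff_tendsto_slope.1 hγ).norm.const_mul a)
    (hasDerivAt_iff_tendsto_slope.1 hδ).norm ?_
  filter_upwards [nhdsWithin_le_nhds h] with t ht
  simp only [slope_def_module, norm_smul]
  calc a * (‖(t - t₀)⁻¹‖ * ‖γ t - γ t₀‖) = ‖(t - t₀)⁻¹‖ * (a * ‖γ t - γ t₀‖) := by ring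
    _ ≤ ‖(t - t₀)⁻¹‖ * ‖δ t - δ t₀‖ := mul_le_mul_of_nonneg_left ht (norm_nonneg _)

theorem HasFDerivAt.mul_norm_apply_le_of_eventually {φ : E → F} {ψ : E → G} {D : E →L[ℝ] F}
    {D' : E →L[ℝ] G} {x : E} (hφ : HasFDerivAt φ D x) (hψ : HasFDerivAt ψ D' x)
    (h : ∀ᶠ y in 𝓝 x, a * ‖φ y - φ x‖ ≤ ‖ψ y - ψ x‖) (v : E) : a * ‖D v‖ ≤ ‖D' v‖ := by
  have hline : HasDerivAt (fun t : ℝ => x + t • v) v 0 := by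
    simpa using ((hasDerivAt_id (0 : ℝ)).smul_const v).const_add x
  have hline0 : x + (0 : ℝ) • v = x := by simp
  rw [← hline0] at hφ hψ
  refine (hφ.comp_hasDerivAt 0 hline).mul_norm_le_of_eventually (hψ.comp_hasDerivAt 0 hline) ?_
  have hto : Tendsto (fun t : ℝ => x + t • v) (𝓝 0) (𝓝 x) := by
    simpa using hline.continuousAt.tendsto
  simpa [Function.comp_def] using hto.eventually h

theorem HasMFDerivAt.hasFDerivAt_comp_extChartAt_symm {H M : Type*} [TopologicalSpace H]
    {I : ModelWithCorners ℝ E H} [I.Boundaryless] [TopologicalSpace M] [ChartedSpace H M]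
    {f : M → F} {Df : E →L[ℝ] F} {z : M} (hf : HasMFDerivAt I 𝓘(ℝ, F) f z Df) :
    HasFDerivAt (f ∘ (extChartAt I z).symm) Df (extChartAt I z z) := by
  have h := hf.2
  rw [I.range_eq_univ] at h
  -- into a model space, `writtenInExtChartAt I 𝓘(ℝ, F) z f` is `f ∘ (extChartAt I z).symm` by `rfl`
  exact hasFDerivWithinAt_univ.1 h

theorem HasMFDerivAt.mul_norm_apply_le_of_eventually {H M : Type*} [TopologicalSpace H]
    {I : ModelWithCorners ℝ E H} [I.Boundaryless] [TopologicalSpace M] [ChartedSpace H M]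
    {f : M → F} {g : M → G} {Df : E →L[ℝ] F} {Dg : E →L[ℝ] G} {z : M}
    (hf : HasMFDerivAt I 𝓘(ℝ, F) f z Df) (hg : HasMFDerivAt I 𝓘(ℝ, G) g z Dg)
    (h : ∀ᶠ z' in 𝓝 z, a * ‖f z' - f z‖ ≤ ‖g z' - g z‖) (v : E) : a * ‖Df v‖ ≤ ‖Dg v‖ := by
  refine hf.hasFDerivAt_comp_extChartAt_symm.mul_norm_apply_le_of_eventually
    hg.hasFDerivAt_comp_extChartAt_symm ?_ v
  have hsymm := continuousAt_extChartAt_symm (I := I) z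
  rw [ContinuousAt, extChartAt_to_inv] at hsymm
  simpa [Function.comp_def] using hsymm.eventually h

theorem HasMFDerivAt.injective_of_eventually_mul_norm_sub_le {H M : Type*} [TopologicalSpace H]
    {I : ModelWithCorners ℝ E H} [I.Boundaryless] [TopologicalSpace M] [ChartedSpace H M]
    {f : M → F} {g : M → G} {Df : E →L[ℝ] F} {Dg : E →L[ℝ] G} {z : M}
    (hf : HasMFDerivAt I 𝓘(ℝ, F) f z Df) (hg : HasMFDerivAt I 𝓘(ℝ, G) g z Dg)
    (hDf : Function.Injective Df) (ha : 0 < a)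
    (h : ∀ᶠ z' in 𝓝 z, a * ‖f z' - f z‖ ≤ ‖g z' - g z‖) : Function.Injective Dg :=
  hDf.of_mul_norm_sub_le ha fun v w => by
    simpa only [map_sub] using hf.mul_norm_apply_le_of_eventually hg h (v - w)

end LowerBound

theorem linear_biLipschitz_on_submanifold_embedding_general
    {d p m : ℕ} {M : Type*} [TopologicalSpace M]
    [ChartedSpace (EuclideanSpace ℝ (Fin d)) M]
    [CompactSpace M]
    (f : M → EuclideanSpace ℝ (Fin p))
    (hf : ContMDiff (𝓡 d) 𝓘(ℝ, EuclideanSpace ℝ (Fin p)) (⊤ : ℕ∞) f)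
    (hfemb : Topology.IsEmbedding f)
    (hfimm : ∀ z : M, Function.Injective (mfderiv (𝓡 d) 𝓘(ℝ, EuclideanSpace ℝ (Fin p)) f z))
    (T : EuclideanSpace ℝ (Fin p) →ₗ[ℝ] EuclideanSpace ℝ (Fin m))
    (c κ : ℝ) (hc : 0 < c) (hκ1 : κ < 1)
    (hlow : ∀ z z' : M, (1 - κ) * c * ‖f z - f z'‖ ≤ ‖T (f z) - T (f z')‖) :
    (∀ z : M, Function.Injective
        (mfderiv (𝓡 d) 𝓘(ℝ, EuclideanSpace ℝ (Fin m)) (fun w => T (f w)) z)) ∧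
    ContMDiff (𝓡 d) 𝓘(ℝ, EuclideanSpace ℝ (Fin m)) (⊤ : ℕ∞) (fun w => T (f w)) ∧
    Topology.IsEmbedding (fun w => T (f w)) := by
  let Tc := LinearMap.toContinuousLinearMap T
  have ha : 0 < (1 - κ) * c := mul_pos (sub_pos.2 hκ1) hc
  refine ⟨fun z => ?_, Tc.contMDiff.comp hf, ?_⟩
  · have hDf := (hf.mdifferentiable (by simp) z).hasMFDerivAt
    have hDg := Tc.hasMFDerivAt.comp z hDf
    rw [show (fun w => T (f w)) = Tc ∘ f from rfl, hDg.mfderiv]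
    exact hDf.injective_of_eventually_mul_norm_sub_le hDg (hfimm z) ha
      (.of_forall fun z' => hlow z' z)
  · exact ((Tc.continuous.comp hf.continuous).isClosedEmbedding
      (hfemb.injective.of_mul_norm_sub_le ha hlow)).isEmbedding

/-- If a linear map `T` is bi-Lipschitz (with constants `(1−κ)c ≤ · ≤ (1+κ)c`)
on the image of a compact smooth embedded submanifold `M` of `ℝᵖ` (realized by
a smooth embedding `f : M → ℝᵖ` with injective differential), then the
differential of `T ∘ f` is injective at every point (so `T` restricted to the
submanifold is a smooth immersion), and `T ∘ f` is a (smooth, topological)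
embedding, i.e. `T` restricted to the submanifold is a diffeomorphism onto its
image. -/
theorem linear_biLipschitz_on_submanifold_embedding
    {d p m : ℕ} {M : Type*} [TopologicalSpace M]
    [ChartedSpace (EuclideanSpace ℝ (Fin d)) M]
    [IsManifold (𝓡 d) (⊤ : ℕ∞) M] [CompactSpace M]
    (f : M → EuclideanSpace ℝ (Fin p))
    (hf : ContMDiff (𝓡 d) 𝓘(ℝ, EuclideanSpace ℝ (Fin p)) (⊤ : ℕ∞) f)
    (hfemb : Topology.IsEmbedding f)
    (hfimm : ∀ z : M, Function.Injective (mfderiv (𝓡 d) 𝓘(ℝ, EuclideanSpace ℝ (Fin p)) f z))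
    (T : EuclideanSpace ℝ (Fin p) →ₗ[ℝ] EuclideanSpace ℝ (Fin m))
    (c κ : ℝ) (hc : 0 < c) (hκ0 : 0 < κ) (hκ1 : κ < 1)
    (hlow : ∀ z z' : M, (1 - κ) * c * ‖f z - f z'‖ ≤ ‖T (f z) - T (f z')‖)
    (hhigh : ∀ z z' : M, ‖T (f z) - T (f z')‖ ≤ (1 + κ) * c * ‖f z - f z'‖) :
    (∀ z : M, Function.Injective
        (mfderiv (𝓡 d) 𝓘(ℝ, EuclideanSpace ℝ (Fin m)) (fun w => T (f w)) z)) ∧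
    ContMDiff (𝓡 d) 𝓘(ℝ, EuclideanSpace ℝ (Fin m)) (⊤ : ℕ∞) (fun w => T (f w)) ∧
    Topology.IsEmbedding (fun w => T (f w)) :=
  linear_biLipschitz_on_submanifold_embedding_general f hf hfemb hfimm T c κ hc hκ1 hlow
end

section
/- If x₁,…,xₙ ∈ ℝᵐ are pairwise distinct, then the Gaussian kernel matrix K with entries K_{ij} = exp(−λ‖xᵢ−xⱼ‖²), λ > 0, is strictly positive definite, hence invertible. -/
open Finset Function Matrix

/-!
Write `exp (-λ‖xᵢ - xⱼ‖²) = dᵢ · exp (2λ⟪xᵢ, xⱼ⟫) · dⱼ` with `dᵢ = exp (-λ‖xᵢ‖²) > 0`, so it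
suffices to show that `E = (exp (t⟪xᵢ, xⱼ⟫))` is positive definite for `t > 0`. Expanding the
exponential, `cᵀ E c = ∑ₖ tᵏ/k! · ∑ᵢⱼ cᵢ cⱼ ⟪xᵢ, xⱼ⟫ᵏ`, and each inner sum is a sum of squares
`∑ₚ (∑ᵢ cᵢ ∏ₗ xᵢ (p l))²` over all `p : Fin k → κ`. If all of them vanished, `c` would
annihilate every polynomial function; but polynomials separate the distinct points `xᵢ`, so some
polynomial vanishes at all `xᵢ` but one, forcing `c = 0`.
-/

theorem Real.exp_neg_mul_norm_sub_sq {E : Type*} [NormedAddCommGroup E] [InnerProductSpace ℝ E]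
    (lam : ℝ) (y z : E) :
    Real.exp (-lam * ‖y - z‖ ^ 2) =
      Real.exp (-lam * ‖y‖ ^ 2) * Real.exp (2 * lam * inner ℝ y z) *
        Real.exp (-lam * ‖z‖ ^ 2) := by
  rw [← Real.exp_add, ← Real.exp_add, norm_sub_sq_real]
  ring_nf

section

variable {ι κ : Type*} [Fintype ι]

theorem sum_sum_mul_inner_pow_eq_sum_sq [Fintype κ] (x : ι → EuclideanSpace ℝ κ) (c : ι → ℝ)
    (k : ℕ) :
    ∑ i, ∑ j, c i * c j * inner ℝ (x i) (x j) ^ k =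
      ∑ p : Fin k → κ, (∑ i, c i * ∏ l, x i (p l)) ^ 2 := by
  simp only [PiLp.inner_apply, RCLike.inner_apply, conj_trivial, Fintype.sum_pow, sq, mul_sum,
    sum_mul]
  conv_rhs => rw [sum_comm]
  refine sum_congr rfl fun j _ => ?_
  rw [sum_comm]
  refine sum_congr rfl fun p _ => sum_congr rfl fun i _ => ?_
  rw [prod_mul_distrib]
  ring

theorem Subalgebra.eq_zero_of_forall_sum_mul_apply_eq_zero {𝕜 α : Type*} [Field 𝕜]
    {A : Subalgebra 𝕜 (α → 𝕜)} (hA : (A : Set (α → 𝕜)).SeparatesPoints) {x : ι → α}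
    (hx : Injective x) {c : ι → 𝕜} (hc : ∀ f ∈ A, ∑ i, c i * f (x i) = 0) : c = 0 := by
  classical
  ext j
  have hsep : ∀ i, ∃ g ∈ A, i ≠ j → g (x i) ≠ g (x j) := fun i =>
    if h : i = j then ⟨0, A.zero_mem, (absurd h ·)⟩
    else
      let ⟨g, hg, hne⟩ := hA (hx.ne h)
      ⟨g, hg, fun _ => hne⟩
  choose g hgA hg using hsep
  let f := ∏ i ∈ univ.erase j, (g i - algebraMap 𝕜 (α → 𝕜) (g i (x i)))
  have hf (y : α) : f y = ∏ i ∈ univ.erase j, (g i y - g i (x i)) := by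
    simp [f, Finset.prod_apply]
  have hfj : f (x j) ≠ 0 := by
    rw [hf, prod_ne_zero_iff]
    exact fun i hi => sub_ne_zero.mpr (hg i (ne_of_mem_erase hi)).symm
  have hfA : f ∈ A := prod_mem fun i _ => sub_mem (hgA i) (A.algebraMap_mem _)
  have hsum := hc f hfA
  rw [sum_eq_single j (fun i _ hij => by
      rw [hf, prod_eq_zero (mem_erase.mpr ⟨hij, mem_univ i⟩) (sub_self _), mul_zero])
    (by simp)] at hsum
  exact (mul_eq_zero.mp hsum).resolve_right hfj

theorem EuclideanSpace.separatesPoints_adjoin_coord :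
    (Algebra.adjoin ℝ (Set.range fun (a : κ) (y : EuclideanSpace ℝ κ) => y a) :
      Set (EuclideanSpace ℝ κ → ℝ)).SeparatesPoints := by
  intro y z hyz
  obtain ⟨a, ha⟩ : ∃ a, y a ≠ z a := by
    by_contra! h
    exact hyz (PiLp.ext h)
  exact ⟨fun y => y a, Algebra.subset_adjoin ⟨a, rfl⟩, ha⟩

theorem sum_mul_apply_eq_zero_of_mem_adjoin_coord {x : ι → EuclideanSpace ℝ κ} {c : ι → ℝ}
    (hc : ∀ (k : ℕ) (p : Fin k → κ), ∑ i, c i * ∏ l, x i (p l) = 0) {f : EuclideanSpace ℝ κ → ℝ}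
    (hf : f ∈ Algebra.adjoin ℝ (Set.range fun (a : κ) (y : EuclideanSpace ℝ κ) => y a)) :
    ∑ i, c i * f (x i) = 0 := by
  let monomials : Submonoid (EuclideanSpace ℝ κ → ℝ) :=
    { carrier := {f | ∃ (k : ℕ) (p : Fin k → κ), f = fun y => ∏ l, y (p l)}
      one_mem' := ⟨0, Fin.elim0, by ext; simp⟩
      mul_mem' := by
        rintro _ _ ⟨k, p, rfl⟩ ⟨k', p', rfl⟩
        exact ⟨k + k', Fin.append p p', by ext; simp [Fin.prod_univ_add]⟩ }
  have hmon : Submonoid.closure (Set.range fun (a : κ) (y : EuclideanSpace ℝ κ) => y a) ≤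
      monomials :=
    Submonoid.closure_le.mpr <| by
      rintro _ ⟨a, rfl⟩
      exact ⟨1, fun _ => a, by ext; simp⟩
  rw [← Subalgebra.mem_toSubmodule, Algebra.adjoin_eq_span] at hf
  induction hf using Submodule.span_induction with
  | mem f hf =>
    obtain ⟨k, p, rfl⟩ := hmon hf
    exact hc k p
  | zero => simp
  | add f g _ _ hf hg => simp [mul_add, sum_add_distrib, hf, hg]
  | smul r f _ hf => simp [mul_left_comm _ r, ← mul_sum, hf]

theorem exists_pos_sum_sum_mul_inner_pow [Fintype κ] {x : ι → EuclideanSpace ℝ κ}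
    (hx : Injective x) {c : ι → ℝ} (hc : c ≠ 0) :
    ∃ k, 0 < ∑ i, ∑ j, c i * c j * inner ℝ (x i) (x j) ^ k := by
  by_contra! h
  refine hc (Subalgebra.eq_zero_of_forall_sum_mul_apply_eq_zero
    EuclideanSpace.separatesPoints_adjoin_coord hx fun f hf =>
      sum_mul_apply_eq_zero_of_mem_adjoin_coord (fun k p => ?_) hf)
  have hsq := (sum_sum_mul_inner_pow_eq_sum_sq x c k).symm.trans_le (h k)
  exact pow_eq_zero_iff two_ne_zero |>.mp <|
    (sum_eq_zero_iff_of_nonneg fun _ _ => sq_nonneg _).mp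
      (le_antisymm hsq (sum_nonneg fun _ _ => sq_nonneg _)) p (mem_univ p)

theorem Matrix.posDef_exp_inner [Fintype κ] {x : ι → EuclideanSpace ℝ κ} (hx : Injective x)
    {t : ℝ} (ht : 0 < t) : (Matrix.of fun i j => Real.exp (t * inner ℝ (x i) (x j))).PosDef := by
  refine .of_dotProduct_mulVec_pos ?_ fun c hc => ?_
  · ext i j
    simp [real_inner_comm]
  have hquad : star c ⬝ᵥ ((Matrix.of fun i j => Real.exp (t * inner ℝ (x i) (x j))) *ᵥ c) =
      ∑ i, ∑ j, c i * c j * Real.exp (t * inner ℝ (x i) (x j)) := by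
    simp only [dotProduct, mulVec, of_apply, star_trivial, mul_sum]
    exact sum_congr rfl fun i _ => sum_congr rfl fun j _ => by ring
  have hexp (i j : ι) :
      HasSum (fun k => c i * c j * ((t * inner ℝ (x i) (x j)) ^ k / k.factorial))
        (c i * c j * Real.exp (t * inner ℝ (x i) (x j))) := by
    rw [Real.exp_eq_exp_ℝ]
    exact (NormedSpace.expSeries_div_hasSum_exp (t * inner ℝ (x i) (x j))).mul_left (c i * c j)
  have hseries : HasSum (fun k => t ^ k / k.factorial *
      ∑ i, ∑ j, c i * c j * inner ℝ (x i) (x j) ^ k)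
      (∑ i, ∑ j, c i * c j * Real.exp (t * inner ℝ (x i) (x j))) := by
    refine (hasSum_sum fun i _ => hasSum_sum fun j _ => hexp i j).congr_fun fun k => ?_
    simp only [mul_sum]
    exact sum_congr rfl fun i _ => sum_congr rfl fun j _ => by ring
  obtain ⟨k, hk⟩ := exists_pos_sum_sum_mul_inner_pow hx hc
  rw [hquad]
  refine hasSum_lt (f := 0) (fun k => ?_) ?_ hasSum_zero hseries (i := k)
  · rw [sum_sum_mul_inner_pow_eq_sum_sq]
    positivity
  · simp only [Pi.zero_apply]
    positivity

end

/-- The Gaussian kernel matrix at pairwise distinct points is positive definite,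
hence invertible. -/
theorem gaussian_kernel_posDef {n m : ℕ} (lam : ℝ) (hlam : 0 < lam)
    (x : Fin n → EuclideanSpace ℝ (Fin m)) (hx : Function.Injective x) :
    (Matrix.of fun i j => Real.exp (-lam * ‖x i - x j‖ ^ 2)).PosDef ∧
      IsUnit (Matrix.of fun i j => Real.exp (-lam * ‖x i - x j‖ ^ 2)).det := by
  set d : Fin n → ℝ := fun i => Real.exp (-lam * ‖x i‖ ^ 2)
  have hK : (Matrix.of fun i j => Real.exp (-lam * ‖x i - x j‖ ^ 2)) =
      (Matrix.diagonal d)ᴴ * Matrix.of (fun i j => Real.exp (2 * lam * inner ℝ (x i) (x j))) *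
        Matrix.diagonal d := by
    ext i j
    rw [of_apply, Real.exp_neg_mul_norm_sub_sq]
    simp [d]
  have hd : Injective (Matrix.diagonal d).mulVec := fun v w hvw => by
    ext i
    simpa [Matrix.mulVec_diagonal, d, (Real.exp_pos _).ne'] using congrFun hvw i
  have hpd := hK ▸ (Matrix.posDef_exp_inner hx (by positivity)).conjTranspose_mul_mul_same hd
  exact ⟨hpd, hpd.det_pos.ne'.isUnit⟩
end
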